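/- arXiv:1910.14604 — 8 statements merged into one kernel-verified Lean document; each statement's English description precedes it below -/
import Mathlib

section
/- If κ : [0,∞) → [0,1) is a class K¹ function differentiable on (0,∞), with derivative κ' > 0 on (0,∞), 0 ≤ p < 1, Tc > 0, and y : [0,∞) → [0,∞) is a differentiable function satisfying y'(t) = -(1/((1-p)·Tc)) · κ(y(t))^p / κ'(y(t)) whenever y(t) > 0 and y'(t) = 0 whenever y(t) = 0, then for all t ∈ [0, Tc·κ(y(0))^{1-p}], κ(y(t)) = (κ(y(0))^{1-p} - t/Tc)^{1/(1-p)}, and y(t) = 0 for all t ≥ Tc·κ(y(0))^{1-p}. -/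
/-! Where `y > 0`, the chain rule turns the equation into `(κ ∘ y)' = -(κ ∘ y) ^ p / ((1 - p) Tc)`,
so `(κ ∘ y) ^ (1 - p)` decreases with slope exactly `-1 / Tc` and
`κ (y t) ^ (1 - p) = κ (y 0) ^ (1 - p) - t / Tc` as long as `y` has stayed positive.
At the first zero `τ` of `y` the left side vanishes, so `τ = Tc κ (y 0) ^ (1 - p)`;
since `y' ≤ 0`, `y` stays at `0` from then on. -/

def IsClassK1 (kappa : ℝ → ℝ) : Prop :=
  ContinuousOn kappa (Set.Ici 0) ∧ StrictMonoOn kappa (Set.Ici 0) ∧ kappa 0 = 0 ∧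
    Filter.Tendsto kappa Filter.atTop (nhds 1) ∧
    ∀ r ∈ Set.Ici (0 : ℝ), kappa r ∈ Set.Ico (0 : ℝ) 1

open Set

namespace IsClassK1

variable {κ : ℝ → ℝ}

theorem continuousOn (hκ : IsClassK1 κ) : ContinuousOn κ (Ici 0) := hκ.1

theorem map_zero (hκ : IsClassK1 κ) : κ 0 = 0 := hκ.2.2.1

theorem nonneg (hκ : IsClassK1 κ) {r : ℝ} (hr : 0 ≤ r) : 0 ≤ κ r := (hκ.2.2.2.2 r hr).1

theorem pos (hκ : IsClassK1 κ) {r : ℝ} (hr : 0 < r) : 0 < κ r := by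
  simpa [hκ.map_zero] using hκ.2.1 (mem_Ici.2 le_rfl) hr.le hr

end IsClassK1

theorem exists_first_zero_of_continuousOn {f : ℝ → ℝ} {a b : ℝ} (hab : a ≤ b)
    (hf : ContinuousOn f (Icc a b)) (hb : f b = 0) :
    ∃ τ ∈ Icc a b, f τ = 0 ∧ ∀ s ∈ Ico a τ, f s ≠ 0 := by
  set Z := Icc a b ∩ f ⁻¹' {0}
  have hZ : IsClosed Z := hf.preimage_isClosed_of_isClosed isClosed_Icc isClosed_singleton
  have hmem : sInf Z ∈ Z := hZ.csInf_mem ⟨b, right_mem_Icc.2 hab, hb⟩ ⟨a, fun s hs => hs.1.1⟩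
  refine ⟨sInf Z, hmem.1, hmem.2, fun s hs hfs => ?_⟩
  have hsZ : s ∈ Z := ⟨⟨hs.1, hs.2.le.trans hmem.1.2⟩, hfs⟩
  exact hs.2.not_ge (csInf_le ⟨a, fun s hs => hs.1.1⟩ hsZ)

theorem hasDerivAt_rpow_one_sub_of_hasDerivAt {u : ℝ → ℝ} {p Tc s : ℝ} (hp : p ≠ 1)
    (hu : 0 < u s) (h : HasDerivAt u (-(1 / ((1 - p) * Tc)) * u s ^ p) s) :
    HasDerivAt (fun t => u t ^ (1 - p)) (-(1 / Tc)) s := by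
  convert h.rpow_const (Or.inl hu.ne') using 1
  have h1p : 1 - p ≠ 0 := sub_ne_zero.2 hp.symm
  have hcancel : u s ^ p * u s ^ (1 - p - 1) = 1 := by
    rw [← Real.rpow_add hu]; simp
  field_simp
  linear_combination Tc⁻¹ * hcancel

structure IsComparisonSolution (κ κ' : ℝ → ℝ) (p Tc : ℝ) (y y' : ℝ → ℝ) : Prop where
  nonneg : ∀ t ≥ (0:ℝ), 0 ≤ y t
  hasDerivAt : ∀ t ≥ (0:ℝ), HasDerivAt y (y' t) t
  deriv_of_pos : ∀ t ≥ (0:ℝ), 0 < y t →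
    y' t = -(1 / ((1 - p) * Tc)) * (κ (y t) ^ p / κ' (y t))
  deriv_of_eq_zero : ∀ t ≥ (0:ℝ), y t = 0 → y' t = 0

namespace IsComparisonSolution

variable {κ κ' y y' : ℝ → ℝ} {p Tc : ℝ}

theorem continuousOn (hy : IsComparisonSolution κ κ' p Tc y y') : ContinuousOn y (Ici 0) :=
  fun t ht => (hy.hasDerivAt t ht).continuousAt.continuousWithinAt

theorem antitoneOn (hy : IsComparisonSolution κ κ' p Tc y y') (hκ : IsClassK1 κ)
    (hκ' : ∀ r > (0:ℝ), HasDerivAt κ (κ' r) r ∧ 0 < κ' r) (hp1 : p < 1) (hTc : 0 < Tc) :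
    AntitoneOn y (Ici 0) := by
  refine antitoneOn_of_hasDerivWithinAt_nonpos (convex_Ici 0) hy.continuousOn
    (fun t ht => (hy.hasDerivAt t (interior_subset ht)).hasDerivWithinAt) fun t ht => ?_
  have ht : 0 ≤ t := interior_subset ht
  rcases (hy.nonneg t ht).eq_or_lt with hyt | hyt
  · exact (hy.deriv_of_eq_zero t ht hyt.symm).le
  · have h1p : 0 < 1 - p := sub_pos.2 hp1
    have := (hκ' _ hyt).2
    have := hκ.pos hyt
    rw [hy.deriv_of_pos t ht hyt, neg_mul, neg_nonpos]
    positivity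

theorem rpow_eq_of_pos_on_Ico (hy : IsComparisonSolution κ κ' p Tc y y') (hκ : IsClassK1 κ)
    (hκ' : ∀ r > (0:ℝ), HasDerivAt κ (κ' r) r ∧ 0 < κ' r) (hp1 : p < 1) {t : ℝ} (ht : 0 ≤ t)
    (hpos : ∀ s ∈ Ico 0 t, 0 < y s) :
    κ (y t) ^ (1 - p) = κ (y 0) ^ (1 - p) - t / Tc := by
  have hderiv : ∀ s ∈ Ico 0 t, HasDerivAt (fun s => κ (y s) ^ (1 - p)) (-(1 / Tc)) s := by
    intro s hs
    have hys := hpos s hs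
    have hκy : HasDerivAt (fun s => κ (y s)) (κ' (y s) * y' s) s :=
      (hκ' _ hys).1.comp s (hy.hasDerivAt s hs.1)
    refine hasDerivAt_rpow_one_sub_of_hasDerivAt hp1.ne (hκ.pos hys) ?_
    convert hκy using 1
    rw [hy.deriv_of_pos s hs.1 hys]
    field_simp [(hκ' _ hys).2.ne']
  have hcont : ContinuousOn (fun s => κ (y s) ^ (1 - p)) (Icc 0 t) :=
    (hκ.continuousOn.comp (hy.continuousOn.mono Icc_subset_Ici_self)
      fun s hs => hy.nonneg s hs.1).rpow_const fun _ _ => Or.inr (sub_pos.2 hp1).le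
  refine eq_of_has_deriv_right_eq (fun s hs => (hderiv s hs).hasDerivWithinAt)
    (fun s _ => ((hasDerivAt_id s).div_const Tc).const_sub _ |>.hasDerivWithinAt.congr_deriv ?_)
    hcont (by fun_prop) (by simp) t (right_mem_Icc.2 ht)
  simp

theorem rpow_eq_of_pos (hy : IsComparisonSolution κ κ' p Tc y y') (hκ : IsClassK1 κ)
    (hκ' : ∀ r > (0:ℝ), HasDerivAt κ (κ' r) r ∧ 0 < κ' r) (hp1 : p < 1) (hTc : 0 < Tc)
    {t : ℝ} (ht : 0 ≤ t) (hyt : 0 < y t) :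
    κ (y t) ^ (1 - p) = κ (y 0) ^ (1 - p) - t / Tc :=
  hy.rpow_eq_of_pos_on_Ico hκ hκ' hp1 ht fun _ hs =>
    hyt.trans_le (hy.antitoneOn hκ hκ' hp1 hTc hs.1 ht hs.2.le)

theorem le_of_eq_zero (hy : IsComparisonSolution κ κ' p Tc y y') (hκ : IsClassK1 κ)
    (hκ' : ∀ r > (0:ℝ), HasDerivAt κ (κ' r) r ∧ 0 < κ' r) (hp1 : p < 1) (hTc : 0 < Tc)
    {t : ℝ} (ht : 0 ≤ t) (hyt : y t = 0) :
    Tc * κ (y 0) ^ (1 - p) ≤ t := by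
  obtain ⟨τ, hτ, hyτ, hfirst⟩ :=
    exists_first_zero_of_continuousOn ht (hy.continuousOn.mono Icc_subset_Ici_self) hyt
  have key := hy.rpow_eq_of_pos_on_Ico hκ hκ' hp1 hτ.1 fun s hs =>
    (hy.nonneg s hs.1).lt_of_ne (hfirst s hs).symm
  rw [hyτ, hκ.map_zero, Real.zero_rpow (sub_pos.2 hp1).ne', eq_comm, sub_eq_zero] at key
  rw [key, mul_div_cancel₀ _ hTc.ne']
  exact hτ.2

end IsComparisonSolution

theorem comparison_ode_solution_general (κ κ' : ℝ → ℝ) (hκ : IsClassK1 κ)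
    (hκ' : ∀ r > (0:ℝ), HasDerivAt κ (κ' r) r ∧ 0 < κ' r)
    (p Tc : ℝ) (hp1 : p < 1) (hTc : 0 < Tc)
    (y y' : ℝ → ℝ) (hy_nonneg : ∀ t ≥ (0:ℝ), 0 ≤ y t)
    (hy_deriv : ∀ t ≥ (0:ℝ), HasDerivAt y (y' t) t)
    (hy_ode : ∀ t ≥ (0:ℝ), 0 < y t →
      y' t = -(1 / ((1 - p) * Tc)) * (κ (y t) ^ p / κ' (y t)))
    (hy_zero : ∀ t ≥ (0:ℝ), y t = 0 → y' t = 0) :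
    (∀ t ∈ Set.Icc (0:ℝ) (Tc * κ (y 0) ^ (1 - p)),
        κ (y t) = (κ (y 0) ^ (1 - p) - t / Tc) ^ (1 / (1 - p))) ∧
    (∀ t ≥ Tc * κ (y 0) ^ (1 - p), y t = 0) := by
  have hy : IsComparisonSolution κ κ' p Tc y y' := ⟨hy_nonneg, hy_deriv, hy_ode, hy_zero⟩
  have h1p : 1 - p ≠ 0 := (sub_pos.2 hp1).ne'
  have hT0 : 0 ≤ Tc * κ (y 0) ^ (1 - p) := by
    have := hκ.nonneg (hy_nonneg 0 le_rfl)
    positivity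
  refine ⟨fun t ⟨ht, htT⟩ => ?_, fun t htT => ?_⟩
  · rcases (hy_nonneg t ht).eq_or_lt with hyt | hyt
    · have htT' : t = Tc * κ (y 0) ^ (1 - p) :=
        htT.antisymm (hy.le_of_eq_zero hκ hκ' hp1 hTc ht hyt.symm)
      rw [← hyt, hκ.map_zero, htT', mul_div_cancel_left₀ _ hTc.ne', sub_self,
        Real.zero_rpow (one_div_ne_zero h1p)]
    · rw [← hy.rpow_eq_of_pos hκ hκ' hp1 hTc ht hyt,
        ← Real.rpow_mul (hκ.nonneg hyt.le), mul_one_div_cancel h1p, Real.rpow_one]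
  · have ht := hT0.trans htT
    by_contra hyt
    have hyt := (hy_nonneg t ht).lt_of_ne (Ne.symm hyt)
    have hkey := hy.rpow_eq_of_pos hκ hκ' hp1 hTc ht hyt
    have hpos : 0 < κ (y t) ^ (1 - p) := Real.rpow_pos_of_pos (hκ.pos hyt) _
    have : κ (y 0) ^ (1 - p) ≤ t / Tc := by rwa [le_div_iff₀ hTc, mul_comm]
    linarith

theorem comparison_ode_solution (κ κ' : ℝ → ℝ) (hκ : IsClassK1 κ)
    (hκ' : ∀ r > (0:ℝ), HasDerivAt κ (κ' r) r ∧ 0 < κ' r)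
    (p Tc : ℝ) (hp : 0 ≤ p) (hp1 : p < 1) (hTc : 0 < Tc)
    (y y' : ℝ → ℝ) (hy_nonneg : ∀ t ≥ (0:ℝ), 0 ≤ y t)
    (hy_deriv : ∀ t ≥ (0:ℝ), HasDerivAt y (y' t) t)
    (hy_ode : ∀ t ≥ (0:ℝ), 0 < y t →
      y' t = -(1 / ((1 - p) * Tc)) * (κ (y t) ^ p / κ' (y t)))
    (hy_zero : ∀ t ≥ (0:ℝ), y t = 0 → y' t = 0) :
    (∀ t ∈ Set.Icc (0:ℝ) (Tc * κ (y 0) ^ (1 - p)),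
        κ (y t) = (κ (y 0) ^ (1 - p) - t / Tc) ^ (1 / (1 - p))) ∧
    (∀ t ≥ Tc * κ (y 0) ^ (1 - p), y t = 0) :=
  comparison_ode_solution_general κ κ' hκ hκ' p Tc hp1 hTc y y' hy_nonneg hy_deriv hy_ode hy_zero
end

section
/- Consider the scalar ODE ẋ = -(1/ρ₁)·⌊x⌉^{ρ₂} - ρ₁·⌊x⌉^{2-ρ₂} with ρ₁ > 0 and 0 < ρ₂ < 1, where ⌊x⌉^h = |x|^h·sign(x). The supremum over initial conditions x₀ ∈ ℝ of the settling time T(x₀) equals π/(2(1-ρ₂)), which is strictly greater than π/2 for all admissible parameter values; hence the settling time bound cannot be made arbitrarily small by tuning ρ₁, ρ₂. -/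
/-! The substitution `u = ρ₁ z^(1-ρ₂)` turns the integrand into `du / ((1-ρ₂)(1+u²))`, so
`T x₀ = arctan (ρ₁ |x₀|^(1-ρ₂)) / (1-ρ₂)`. This is bounded by `π / (2(1-ρ₂))` and tends to it as
`|x₀| → ∞`. -/

open intervalIntegral Real Set Filter Topology

theorem hasDerivAt_arctan_mul_rpow_div {c ρ z : ℝ} (hc : c ≠ 0) (hρ : ρ ≠ 1) (hz : 0 < z) :
    HasDerivAt (fun z => arctan (c * z ^ (1 - ρ)) / (1 - ρ))
      (1 / ((1 / c) * z ^ ρ + c * z ^ (2 - ρ))) z := by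
  have hpow : HasDerivAt (fun z => c * z ^ (1 - ρ)) (c * ((1 - ρ) * z ^ (1 - ρ - 1))) z :=
    (hasDerivAt_rpow_const (Or.inl hz.ne')).const_mul c
  refine (((hasDerivAt_arctan _).comp z hpow).div_const (1 - ρ)).congr_deriv ?_
  have hsq : z ^ (2 - ρ) = z ^ ρ * (z ^ (1 - ρ)) ^ 2 := by
    rw [← rpow_natCast, ← rpow_mul hz.le, ← rpow_add hz]
    ring_nf
  have hneg : z ^ (1 - ρ - 1) = (z ^ ρ)⁻¹ := by
    rw [show 1 - ρ - 1 = -ρ by ring, rpow_neg hz.le]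
  simp only [hsq, hneg]
  field_simp

theorem integral_one_div_inv_mul_rpow_add_mul_rpow {c ρ t : ℝ} (hc : 0 < c) (hρ : ρ < 1)
    (ht : 0 ≤ t) :
    ∫ z in (0:ℝ)..t, 1 / ((1 / c) * z ^ ρ + c * z ^ (2 - ρ)) =
      arctan (c * t ^ (1 - ρ)) / (1 - ρ) := by
  have hcont : ContinuousOn (fun z : ℝ => arctan (c * z ^ (1 - ρ)) / (1 - ρ)) (Icc 0 t) :=
    ((continuous_arctan.comp (continuous_const.mul
      (continuous_id.rpow_const fun _ => Or.inr (by linarith)))).div_const _).continuousOn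
  have hderiv : ∀ z ∈ Ioo 0 t, HasDerivAt (fun z : ℝ => arctan (c * z ^ (1 - ρ)) / (1 - ρ))
      (1 / ((1 / c) * z ^ ρ + c * z ^ (2 - ρ))) z :=
    fun z hz => hasDerivAt_arctan_mul_rpow_div hc.ne' hρ.ne hz.1
  have hnonneg : ∀ z ∈ Ioo 0 t, 0 ≤ 1 / ((1 / c) * z ^ ρ + c * z ^ (2 - ρ)) := fun z hz => by
    have := hz.1
    positivity
  have hint : IntervalIntegrable (fun z : ℝ => 1 / ((1 / c) * z ^ ρ + c * z ^ (2 - ρ)))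
      MeasureTheory.volume 0 t :=
    (intervalIntegrable_iff_integrableOn_Ioc_of_le ht).mpr
      (integrableOn_deriv_of_nonneg hcont hderiv hnonneg)
  rw [integral_eq_sub_of_hasDerivAt_of_le ht hcont hderiv hint,
    zero_rpow (by linarith), mul_zero, arctan_zero, zero_div, sub_zero]

theorem settling_time_sup_fixed_not_predefined (ρ₁ ρ₂ : ℝ)
    (hρ₁ : 0 < ρ₁) (hρ₂ : 0 < ρ₂) (hρ₂' : ρ₂ < 1) (T : ℝ → ℝ)
    (hT : ∀ x₀ : ℝ,
      T x₀ = ∫ z in (0:ℝ)..|x₀|, 1 / ((1 / ρ₁) * z ^ ρ₂ + ρ₁ * z ^ (2 - ρ₂))) :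
    (⨆ x₀ : ℝ, T x₀) = Real.pi / (2 * (1 - ρ₂)) ∧
      Real.pi / 2 < Real.pi / (2 * (1 - ρ₂)) := by
  have ha : 0 < 1 - ρ₂ := by linarith
  have hT' : T = fun x₀ => arctan (ρ₁ * |x₀| ^ (1 - ρ₂)) / (1 - ρ₂) := funext fun x₀ => by
    rw [hT, integral_one_div_inv_mul_rpow_add_mul_rpow hρ₁ hρ₂' (abs_nonneg x₀)]
  have hlim : π / (2 * (1 - ρ₂)) = π / 2 / (1 - ρ₂) := by rw [div_div, mul_comm]
  refine ⟨iSup_eq_of_forall_le_of_tendsto (F := atTop) (fun x₀ => ?_) ?_, ?_⟩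
  · rw [hT', hlim]
    exact div_le_div_of_nonneg_right (arctan_lt_pi_div_two _).le ha.le
  · have harg : Tendsto (fun x₀ : ℝ => ρ₁ * |x₀| ^ (1 - ρ₂)) atTop atTop :=
      ((tendsto_rpow_atTop ha).comp tendsto_abs_atTop_atTop).const_mul_atTop hρ₁
    rw [hT', hlim]
    exact ((tendsto_arctan_atTop.mono_right nhdsWithin_le_nhds).comp harg).div_const _
  · rw [hlim]
    exact (lt_div_iff₀ ha).mpr (mul_lt_of_lt_one_right (by positivity) (by linarith))
end

section
/- For ρ₁ > 0 and 0 < ρ₂ < 1, the improper integral ∫₀^∞ dz / ((1/ρ₁)·z^{ρ₂} + ρ₁·z^{2-ρ₂}) equals π/(2(1-ρ₂)). -/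
open MeasureTheory

/- For ρ₁ > 0 and 0 < ρ₂ < 1,
∫ z in (0,∞), dz / ((1/ρ₁) z^ρ₂ + ρ₁ z^(2-ρ₂)) = π/(2(1-ρ₂)). -/
theorem integral_fixed_time_bound (ρ₁ ρ₂ : ℝ)
    (hρ₁ : 0 < ρ₁) (hρ₂ : 0 < ρ₂) (hρ₂' : ρ₂ < 1) :
    ∫ z in Set.Ioi (0:ℝ), 1 / ((1 / ρ₁) * z ^ ρ₂ + ρ₁ * z ^ (2 - ρ₂)) =
      Real.pi / (2 * (1 - ρ₂)) := by
  have hp : (0:ℝ) < 1 - ρ₂ := by linarith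
  have key : ∀ x ∈ Set.Ioi (0:ℝ),
      1 / ((1 / ρ₁) * x ^ ρ₂ + ρ₁ * x ^ (2 - ρ₂)) =
      (|1 - ρ₂| * x ^ ((1 - ρ₂) - 1)) •
        (fun y : ℝ => (1 - ρ₂)⁻¹ * (ρ₁ * (1 + (ρ₁ * y) ^ 2)⁻¹)) (x ^ (1 - ρ₂)) := by
    intro x hx
    have hx : (0:ℝ) < x := hx
    have h1 : x ^ (2 - ρ₂) = x ^ ρ₂ * x ^ (2 - 2 * ρ₂) := by
      rw [← Real.rpow_add hx]; ring_nf
    have h2 : (x ^ (1 - ρ₂)) ^ 2 = x ^ (2 - 2 * ρ₂) := by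
      rw [← Real.rpow_natCast (x ^ (1 - ρ₂)) 2, ← Real.rpow_mul hx.le]
      norm_num; ring_nf
    have h3 : x ^ ((1 - ρ₂) - 1) = (x ^ ρ₂)⁻¹ := by
      rw [show (1 - ρ₂) - 1 = -ρ₂ by ring, Real.rpow_neg hx.le]
    have hxρ : (0:ℝ) < x ^ ρ₂ := Real.rpow_pos_of_pos hx _
    have hx2 : (0:ℝ) < x ^ (2 - 2 * ρ₂) := Real.rpow_pos_of_pos hx _
    have hd : (0:ℝ) < 1 + ρ₁ ^ 2 * x ^ (2 - 2 * ρ₂) := by positivity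
    rw [abs_of_pos hp]
    simp only [smul_eq_mul, h1, h2, h3, mul_pow]
    field_simp
  rw [setIntegral_congr_fun measurableSet_Ioi key,
    MeasureTheory.integral_comp_rpow_Ioi (fun y : ℝ => (1 - ρ₂)⁻¹ * (ρ₁ * (1 + (ρ₁ * y) ^ 2)⁻¹)) hp.ne',
    MeasureTheory.integral_const_mul, MeasureTheory.integral_const_mul,
    MeasureTheory.integral_comp_mul_left_Ioi (fun x => (1 + x ^ 2)⁻¹) 0 hρ₁]
  simp only [mul_zero, integral_Ioi_inv_one_add_sq, Real.arctan_zero, sub_zero, smul_eq_mul]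
  field_simp
end

section
/- For a > 0, the improper integral ∫₀^∞ dz / (a·z + a·z³)^{1/2} equals Γ(1/4)²/(2·a^{1/2}·Γ(1/2)). Consequently, choosing a = Γ(1/4)⁴/(4π·Tc²) makes this integral equal to Tc for any prescribed Tc > 0. -/
open MeasureTheory

open Set in

open Set in
lemma beta_Ioo : ∫ t in Set.Ioo (0:ℝ) 1, t ^ (-(3/4):ℝ) * (1-t) ^ (-(3/4):ℝ)
    = Real.Gamma (1/4) ^ 2 / Real.Gamma (1/2) := by
  have h14 : (0:ℝ) < (1/4 : ℂ).re := by norm_num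
  have hb := Complex.Gamma_mul_Gamma_eq_betaIntegral h14 h14
  have hbeta : Complex.betaIntegral (1/4) (1/4)
      = ((∫ t in Set.Ioo (0:ℝ) 1, t ^ (-(3/4):ℝ) * (1-t) ^ (-(3/4):ℝ) : ℝ) : ℂ) := by
    rw [Complex.betaIntegral]
    rw [show ∫ x : ℝ in (0:ℝ)..1, (x:ℂ) ^ ((1/4:ℂ) - 1) * (1 - (x:ℂ)) ^ ((1/4:ℂ) - 1)
        = ∫ x : ℝ in (0:ℝ)..1, ((x ^ (-(3/4):ℝ) * (1-x) ^ (-(3/4):ℝ) : ℝ) : ℂ) from ?_]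
    · rw [intervalIntegral.integral_ofReal, intervalIntegral.integral_of_le zero_le_one,
        integral_Ioc_eq_integral_Ioo]
    · refine intervalIntegral.integral_congr fun x hx => ?_
      rw [Set.uIcc_of_le zero_le_one] at hx
      obtain ⟨h0, h1⟩ := hx
      rw [Complex.ofReal_mul, Complex.ofReal_cpow h0,
        Complex.ofReal_cpow (by linarith : (0:ℝ) ≤ 1 - x)]
      push_cast
      norm_num
  rw [hbeta] at hb
  have h2 : (1/4 : ℂ) + 1/4 = ((1/2 : ℝ) : ℂ) := by norm_num
  rw [h2, Complex.Gamma_ofReal,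
    show (1/4 : ℂ) = ((1/4:ℝ):ℂ) by norm_num, Complex.Gamma_ofReal] at hb
  have hreal : Real.Gamma (1/4) * Real.Gamma (1/4)
      = Real.Gamma (1/2) * ∫ t in Set.Ioo (0:ℝ) 1, t ^ (-(3/4):ℝ) * (1-t) ^ (-(3/4):ℝ) := by
    exact_mod_cast hb
  have hg : Real.Gamma (1/2) ≠ 0 := (Real.Gamma_pos_of_pos (by norm_num)).ne'
  rw [eq_div_iff hg]
  rw [pow_two, hreal, mul_comm]

open Set in
lemma sub_Ioi : ∫ u in Set.Ioi (0:ℝ), u ^ (-(3/4):ℝ) * (1+u) ^ (-(1/2):ℝ)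
    = ∫ t in Set.Ioo (0:ℝ) 1, t ^ (-(3/4):ℝ) * (1-t) ^ (-(3/4):ℝ) := by
  have himg : (fun t : ℝ => t / (1 - t)) '' Set.Ioo 0 1 = Set.Ioi (0:ℝ) := by
    ext u
    constructor
    · rintro ⟨t, ⟨h0, h1⟩, rfl⟩
      exact div_pos h0 (by linarith)
    · intro hu
      rw [Set.mem_Ioi] at hu
      refine ⟨u / (1 + u), ⟨div_pos hu (by linarith), (div_lt_one (by linarith)).2 (by linarith)⟩, ?_⟩
      field_simp
      ring
  have hderiv : ∀ t ∈ Set.Ioo (0:ℝ) 1, HasDerivWithinAt (fun t : ℝ => t / (1 - t))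
      (((1 - t) ^ 2)⁻¹) (Set.Ioo 0 1) t := by
    intro t ⟨h0, h1⟩
    have hne : (1 : ℝ) - t ≠ 0 := by linarith
    have := (hasDerivAt_id t).div ((hasDerivAt_id t).const_sub 1) hne
    exact this.hasDerivWithinAt.congr_deriv (by
      show (1 * (1 - t) - t * -1) / (1 - t) ^ 2 = ((1 - t) ^ 2)⁻¹
      ring)
  have hinj : Set.InjOn (fun t : ℝ => t / (1 - t)) (Set.Ioo 0 1) := by
    rintro x ⟨hx0, hx1⟩ y ⟨hy0, hy1⟩ h
    have hx : (1:ℝ) - x ≠ 0 := by linarith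
    have hy : (1:ℝ) - y ≠ 0 := by linarith
    field_simp at h
    nlinarith [h]
  rw [← himg, integral_image_eq_integral_abs_deriv_smul measurableSet_Ioo hderiv hinj]
  refine setIntegral_congr_fun measurableSet_Ioo fun t ⟨h0, h1⟩ => ?_
  have hs : (0:ℝ) < 1 - t := by linarith
  have h1t : (1:ℝ) + t / (1 - t) = (1 - t)⁻¹ := by field_simp; ring
  have hdiv : t / (1 - t) = t * (1 - t)⁻¹ := by ring
  rw [smul_eq_mul, h1t, hdiv, Real.mul_rpow h0.le (by positivity),
    ← Real.rpow_neg_one (1 - t), ← Real.rpow_natCast (1-t) 2,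
    ← Real.rpow_mul hs.le, ← Real.rpow_mul hs.le,
    ← Real.rpow_neg_one ((1-t) ^ ((2:ℕ):ℝ)), ← Real.rpow_mul hs.le,
    abs_of_nonneg (Real.rpow_nonneg hs.le _)]
  rw [mul_comm, mul_assoc, mul_assoc, ← Real.rpow_add hs, ← Real.rpow_add hs]
  norm_num

open Set in
lemma half_int : ∫ x in Set.Ioi (0:ℝ), x ^ (-(1/2):ℝ) * (1+x^2) ^ (-(1/2):ℝ)
    = Real.Gamma (1/4) ^ 2 / (2 * Real.Gamma (1/2)) := by
  have key := MeasureTheory.integral_comp_rpow_Ioi_of_pos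
    (g := fun u : ℝ => u ^ (-(3/4):ℝ) * (1+u) ^ (-(1/2):ℝ)) (p := 2) two_pos
  rw [sub_Ioi, beta_Ioo] at key
  have hpt : ∀ x ∈ Set.Ioi (0:ℝ),
      ((2:ℝ) * x ^ ((2:ℝ)-1)) • ((x ^ (2:ℝ)) ^ (-(3/4):ℝ) * (1+x ^ (2:ℝ)) ^ (-(1/2):ℝ))
      = 2 * (x ^ (-(1/2):ℝ) * (1+x^2) ^ (-(1/2):ℝ)) := by
    intro x hx
    rw [Set.mem_Ioi] at hx
    have h2 : x ^ (2:ℝ) = x ^ 2 := by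
      rw [← Real.rpow_natCast x 2]; norm_num
    have e1 : (x ^ (2:ℝ)) ^ (-(3/4):ℝ) = x ^ (-(3/2):ℝ) := by
      rw [← Real.rpow_mul hx.le]; norm_num
    have e2 : x ^ ((2:ℝ)-1) = x := by
      rw [show (2:ℝ)-1 = (1:ℝ) by norm_num, Real.rpow_one]
    have e3 : x * x ^ (-(3/2):ℝ) = x ^ (-(1/2):ℝ) := by
      nth_rewrite 1 [← Real.rpow_one x]
      rw [← Real.rpow_add hx]; norm_num
    rw [smul_eq_mul, e1, e2, h2]
    linear_combination 2 * (1+x^2) ^ (-(1/2):ℝ) * e3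
  rw [setIntegral_congr_fun measurableSet_Ioi hpt, MeasureTheory.integral_const_mul] at key
  rw [show Real.Gamma (1/4) ^ 2 / (2 * Real.Gamma (1/2))
      = (1/2) * (Real.Gamma (1/4) ^ 2 / Real.Gamma (1/2)) by ring, ← key]
  ring

/- For a > 0, ∫ z in (0,∞), dz / (a z + a z³)^(1/2) = Γ(1/4)² / (2 a^(1/2) Γ(1/2)),
and with a = Γ(1/4)⁴/(4π Tc²) the integral equals Tc. -/
theorem integral_predefined_time (a : ℝ) (ha : 0 < a) :
    (∫ z in Set.Ioi (0:ℝ), 1 / (a * z + a * z ^ 3) ^ ((1:ℝ)/2) =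
      Real.Gamma (1/4) ^ 2 / (2 * a ^ ((1:ℝ)/2) * Real.Gamma (1/2))) ∧
    (∀ Tc : ℝ, 0 < Tc → a = Real.Gamma (1/4) ^ 4 / (4 * Real.pi * Tc ^ 2) →
      ∫ z in Set.Ioi (0:ℝ), 1 / (a * z + a * z ^ 3) ^ ((1:ℝ)/2) = Tc) := by
  have hga : (0:ℝ) < a ^ ((1:ℝ)/2) := Real.rpow_pos_of_pos ha _
  have hg2 : (0:ℝ) < Real.Gamma (1/2) := Real.Gamma_pos_of_pos (by norm_num)
  have main : ∫ z in Set.Ioi (0:ℝ), 1 / (a * z + a * z ^ 3) ^ ((1:ℝ)/2) =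
      Real.Gamma (1/4) ^ 2 / (2 * a ^ ((1:ℝ)/2) * Real.Gamma (1/2)) := by
    have hpt : ∀ z ∈ Set.Ioi (0:ℝ), 1 / (a * z + a * z ^ 3) ^ ((1:ℝ)/2)
        = (a ^ ((1:ℝ)/2))⁻¹ * (z ^ (-(1/2):ℝ) * (1+z^2) ^ (-(1/2):ℝ)) := by
      intro z hz
      rw [Set.mem_Ioi] at hz
      rw [show a * z + a * z ^ 3 = a * (z * (1 + z ^ 2)) by ring,
        Real.mul_rpow ha.le (by positivity), Real.mul_rpow hz.le (by positivity),
        Real.rpow_neg hz.le, Real.rpow_neg (by positivity), one_div, mul_inv, mul_inv]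
    rw [setIntegral_congr_fun measurableSet_Ioi hpt, MeasureTheory.integral_const_mul, half_int]
    field_simp
  refine ⟨main, fun Tc hTc haeq => ?_⟩
  have hgq : (0:ℝ) < Real.Gamma (1/4) := Real.Gamma_pos_of_pos (by norm_num)
  have hsp : (0:ℝ) < Real.sqrt Real.pi := Real.sqrt_pos.2 Real.pi_pos
  set b : ℝ := Real.Gamma (1/4) ^ 2 / (2 * Real.sqrt Real.pi * Tc) with hbdef
  have hbpos : 0 < b := by
    apply div_pos (pow_pos hgq 2); positivity
  have hab : a = b ^ 2 := by
    rw [haeq, hbdef]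
    rw [div_pow]
    rw [show (2 * Real.sqrt Real.pi * Tc) ^ 2 = 4 * Real.sqrt Real.pi ^ 2 * Tc ^ 2 by ring,
      Real.sq_sqrt Real.pi_pos.le]
    ring
  have hah : a ^ ((1:ℝ)/2) = b := by
    rw [hab, ← Real.rpow_natCast b 2, ← Real.rpow_mul hbpos.le]
    norm_num
  rw [main, hah, Real.Gamma_one_half_eq, hbdef]
  field_simp
end

section
/- Let V : ℝⁿ → [0,∞) be continuous, positive definite (V(x) = 0 iff x = 0) and radially unbounded, let κ be a class K¹ function differentiable on (0,∞) with κ' > 0, let 0 ≤ p < 1 and Tc > 0. If x : [0,∞) → ℝⁿ is a solution of ẋ = f(x) such that t ↦ V(x(t)) is differentiable and satisfies d/dt V(x(t)) ≤ -(1/((1-p)Tc)) · κ(V(x(t)))^p / κ'(V(x(t))) whenever x(t) ≠ 0, and x(t) = x(s) for t ≥ s whenever x(s) = 0, then x(t) = 0 for all t ≥ Tc·κ(V(x(0)))^{1-p}, and in particular for all t ≥ Tc. -/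
/-!
The settling-time estimate `u t = Tc * κ (V (x t)) ^ (1 - p)` decreases at rate at least one as
long as `x t ≠ 0`, by the chain rule and the differential inequality. Being positive while
`x t ≠ 0`, it cannot stay so up to time `u 0 = Tc * κ (V (x 0)) ^ (1 - p)`; so the trajectory
reaches the origin by then and stays there afterwards. Finally `κ < 1` gives `u 0 ≤ Tc`.
-/

open Set

theorem hasDerivAt_mul_rpow_comp {Tc p k w' t : ℝ} {κ w : ℝ → ℝ}
    (hκ : HasDerivAt κ k (w t)) (hw : HasDerivAt w w' t) (hκw : 0 < κ (w t)) :
    HasDerivAt (fun τ => Tc * κ (w τ) ^ (1 - p))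
      (Tc * ((1 - p) * κ (w t) ^ (-p) * (k * w'))) t := by
  refine (((hκ.comp t hw).rpow_const (Or.inl hκw.ne')).const_mul Tc).congr_deriv ?_
  rw [Function.comp_apply, sub_sub_cancel_left]
  ring

theorem mul_rpow_neg_mul_le_neg_one {Tc p c k w' : ℝ} (hTc : 0 < Tc) (hp1 : p < 1) (hc : 0 < c)
    (hk : 0 < k) (hw' : w' ≤ -(1 / ((1 - p) * Tc)) * (c ^ p / k)) :
    Tc * ((1 - p) * c ^ (-p) * (k * w')) ≤ -1 := by
  have h1p : 0 < 1 - p := sub_pos.2 hp1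
  have hrate : 0 < Tc * ((1 - p) * c ^ (-p) * k) := by positivity
  have hcancel :
      Tc * ((1 - p) * c ^ (-p) * k) * (-(1 / ((1 - p) * Tc)) * (c ^ p / k)) = -1 := by
    rw [Real.rpow_neg hc.le]
    field_simp
  calc Tc * ((1 - p) * c ^ (-p) * (k * w')) = Tc * ((1 - p) * c ^ (-p) * k) * w' := by ring
    _ ≤ Tc * ((1 - p) * c ^ (-p) * k) * (-(1 / ((1 - p) * Tc)) * (c ^ p / k)) :=
        mul_le_mul_of_nonneg_left hw' hrate.le
    _ = -1 := hcancel

theorem exists_nonpos_of_hasDerivAt_le_settling_rate {Tc p : ℝ} {κ κ' w w' : ℝ → ℝ}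
    (hTc : 0 < Tc) (hp1 : p < 1) (hκ_pos : ∀ r > 0, 0 < κ r)
    (hκ' : ∀ r > 0, HasDerivAt κ (κ' r) r ∧ 0 < κ' r) (hκw0 : 0 ≤ κ (w 0))
    (hw : ∀ t ≥ 0, HasDerivAt w (w' t) t)
    (hw_ineq : ∀ t ≥ 0, 0 < w t →
      w' t ≤ -(1 / ((1 - p) * Tc)) * (κ (w t) ^ p / κ' (w t))) :
    ∃ t ∈ Icc 0 (Tc * κ (w 0) ^ (1 - p)), w t ≤ 0 := by
  set u : ℝ → ℝ := fun τ => Tc * κ (w τ) ^ (1 - p)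
  set T := u 0
  have hT : 0 ≤ T := mul_nonneg hTc.le (Real.rpow_nonneg hκw0 _)
  by_contra! hpos
  have hu : ∀ t ∈ Icc 0 T,
      HasDerivAt u (Tc * ((1 - p) * κ (w t) ^ (-p) * (κ' (w t) * w' t))) t :=
    fun t ht => hasDerivAt_mul_rpow_comp (hκ' _ (hpos t ht)).1 (hw t ht.1) (hκ_pos _ (hpos t ht))
  have hdecay : u T - u 0 ≤ -1 * (T - 0) := by
    refine (convex_Icc 0 T).image_sub_le_mul_sub_of_deriv_le
      (fun t ht => (hu t ht).continuousAt.continuousWithinAt)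
      (fun t ht => (hu t (interior_subset ht)).differentiableAt.differentiableWithinAt)
      (fun t ht => ?_) 0 ⟨le_rfl, hT⟩ T ⟨hT, le_rfl⟩ hT
    have ht := interior_subset ht
    rw [(hu t ht).deriv]
    exact mul_rpow_neg_mul_le_neg_one hTc hp1 (hκ_pos _ (hpos t ht)) (hκ' _ (hpos t ht)).2
      (hw_ineq t ht.1 (hpos t ht))
  have huT : 0 < u T := mul_pos hTc (Real.rpow_pos_of_pos (hκ_pos _ (hpos T ⟨hT, le_rfl⟩)) _)
  linarith

theorem predefined_time_lyapunov_general {n : ℕ}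
    (V : EuclideanSpace ℝ (Fin n) → ℝ)
    (hV_nonneg : ∀ z, 0 ≤ V z)
    (hV_pos : ∀ z, z ≠ 0 → 0 < V z) (hV0 : V 0 = 0)
    (κ κ' : ℝ → ℝ) (hκ : IsClassK1 κ)
    (hκ' : ∀ r > (0:ℝ), HasDerivAt κ (κ' r) r ∧ 0 < κ' r)
    (p Tc : ℝ) (hp1 : p < 1) (hTc : 0 < Tc)
    (x : ℝ → EuclideanSpace ℝ (Fin n)) (w' : ℝ → ℝ)
    (hw_deriv : ∀ t ≥ (0:ℝ), HasDerivAt (fun τ => V (x τ)) (w' t) t)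
    (hw_ineq : ∀ t ≥ (0:ℝ), x t ≠ 0 →
      w' t ≤ -(1 / ((1 - p) * Tc)) * (κ (V (x t)) ^ p / κ' (V (x t))))
    (hx_stay : ∀ s t : ℝ, 0 ≤ s → s ≤ t → x s = 0 → x t = x s) :
    (∀ t ≥ Tc * κ (V (x 0)) ^ (1 - p), x t = 0) ∧ (∀ t ≥ Tc, x t = 0) := by
  obtain ⟨-, hκ_mono, hκ0, -, hκ_range⟩ := hκ
  have hκ_pos : ∀ r > 0, 0 < κ r := fun r hr => hκ0 ▸ hκ_mono (mem_Ici.2 le_rfl) hr.le hr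
  have hκx0 := hκ_range _ (hV_nonneg (x 0))
  obtain ⟨t₀, ht₀, hVt₀⟩ :=
    exists_nonpos_of_hasDerivAt_le_settling_rate hTc hp1 hκ_pos hκ' hκx0.1 hw_deriv
      fun t ht hVt => hw_ineq t ht fun hxt => (hV0 ▸ hxt ▸ hVt).false
  have hxt₀ : x t₀ = 0 := by_contra fun h => (hV_pos _ h).not_ge hVt₀
  have hsettled : ∀ t ≥ Tc * κ (V (x 0)) ^ (1 - p), x t = 0 := fun t ht =>
    (hx_stay t₀ t ht₀.1 (ht₀.2.trans ht) hxt₀).trans hxt₀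
  have hT_le : Tc * κ (V (x 0)) ^ (1 - p) ≤ Tc :=
    mul_le_of_le_one_right hTc.le (Real.rpow_le_one hκx0.1 hκx0.2.le (sub_pos.2 hp1).le)
  exact ⟨hsettled, fun t ht => hsettled t (hT_le.trans ht)⟩

theorem predefined_time_lyapunov {n : ℕ}
    (f : EuclideanSpace ℝ (Fin n) → EuclideanSpace ℝ (Fin n))
    (V : EuclideanSpace ℝ (Fin n) → ℝ)
    (hV_cont : Continuous V) (hV_nonneg : ∀ z, 0 ≤ V z)
    (hV_pos : ∀ z, z ≠ 0 → 0 < V z) (hV0 : V 0 = 0)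
    (hV_rad : Filter.Tendsto V (Filter.comap norm Filter.atTop) Filter.atTop)
    (κ κ' : ℝ → ℝ) (hκ : IsClassK1 κ)
    (hκ' : ∀ r > (0:ℝ), HasDerivAt κ (κ' r) r ∧ 0 < κ' r)
    (p Tc : ℝ) (hp : 0 ≤ p) (hp1 : p < 1) (hTc : 0 < Tc)
    (x : ℝ → EuclideanSpace ℝ (Fin n)) (w' : ℝ → ℝ)
    (hx_sol : ∀ t ≥ (0:ℝ), HasDerivAt x (f (x t)) t)
    (hw_deriv : ∀ t ≥ (0:ℝ), HasDerivAt (fun τ => V (x τ)) (w' t) t)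
    (hw_ineq : ∀ t ≥ (0:ℝ), x t ≠ 0 →
      w' t ≤ -(1 / ((1 - p) * Tc)) * (κ (V (x t)) ^ p / κ' (V (x t))))
    (hx_stay : ∀ s t : ℝ, 0 ≤ s → s ≤ t → x s = 0 → x t = x s) :
    (∀ t ≥ Tc * κ (V (x 0)) ^ (1 - p), x t = 0) ∧ (∀ t ≥ Tc, x t = 0) :=
  predefined_time_lyapunov_general V hV_nonneg hV_pos hV0 κ κ' hκ hκ' p Tc hp1 hTc x w' hw_deriv
    hw_ineq hx_stay
end

section
/- Let W : ℝⁿ → [0,1) satisfy W(x) = 0 iff x = 0, let 0 ≤ p < 1 and Tc > 0. If along a solution x(t) of ẋ = f(x) the map t ↦ W(x(t)) is differentiable and satisfies d/dt W(x(t)) ≤ -(1/((1-p)Tc)) · W(x(t))^p whenever x(t) ≠ 0, and solutions stay at 0 once they reach 0, then x(t) = 0 for all t ≥ Tc·W(x(0))^{1-p}, hence for all t ≥ Tc. -/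
/- Transformed Lyapunov theorem: if W : ℝⁿ → [0,1) with W(x) = 0 iff x = 0 and along
a solution d/dt W(x(t)) ≤ -(1/((1-p)Tc)) W(x(t))^p whenever x(t) ≠ 0, then x(t) = 0
for all t ≥ Tc W(x 0)^(1-p), hence for all t ≥ Tc. -/
theorem predefined_time_lyapunov_W {n : ℕ}
    (f : EuclideanSpace ℝ (Fin n) → EuclideanSpace ℝ (Fin n))
    (W : EuclideanSpace ℝ (Fin n) → ℝ)
    (hW_mem : ∀ z, W z ∈ Set.Ico (0:ℝ) 1)
    (hW_zero : ∀ z, W z = 0 ↔ z = 0)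
    (p Tc : ℝ) (hp : 0 ≤ p) (hp1 : p < 1) (hTc : 0 < Tc)
    (x : ℝ → EuclideanSpace ℝ (Fin n)) (w' : ℝ → ℝ)
    (hx_sol : ∀ t ≥ (0:ℝ), HasDerivAt x (f (x t)) t)
    (hw_deriv : ∀ t ≥ (0:ℝ), HasDerivAt (fun τ => W (x τ)) (w' t) t)
    (hw_ineq : ∀ t ≥ (0:ℝ), x t ≠ 0 →
      w' t ≤ -(1 / ((1 - p) * Tc)) * W (x t) ^ p)
    (hx_stay : ∀ s t : ℝ, 0 ≤ s → s ≤ t → x s = 0 → x t = x s) :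
    (∀ t ≥ Tc * W (x 0) ^ (1 - p), x t = 0) ∧ (∀ t ≥ Tc, x t = 0) := by
  have h1p : 0 < 1 - p := by linarith
  have hW0 : (0:ℝ) ≤ W (x 0) := (hW_mem (x 0)).1
  have hT0 : (0:ℝ) ≤ Tc * W (x 0) ^ (1 - p) := by positivity
  have main : ∀ t ≥ Tc * W (x 0) ^ (1 - p), x t = 0 := by
    intro t ht
    by_contra hxt
    have ht0 : (0:ℝ) ≤ t := le_trans hT0 ht
    have hne : ∀ s ∈ Set.Icc (0:ℝ) t, x s ≠ 0 := by
      intro s hs h0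
      exact hxt (by rw [hx_stay s t hs.1 hs.2 h0, h0])
    have hVpos : ∀ s ∈ Set.Icc (0:ℝ) t, 0 < W (x s) := fun s hs =>
      lt_of_le_of_ne (hW_mem (x s)).1 (fun h => hne s hs ((hW_zero (x s)).1 h.symm))
    set g : ℝ → ℝ := fun s => W (x s) ^ (1 - p) + s / Tc with hg
    have hgderiv : ∀ s ∈ Set.Icc (0:ℝ) t,
        HasDerivAt g (w' s * (1 - p) * W (x s) ^ (1 - p - 1) + 1 / Tc) s := by
      intro s hs
      exact ((hw_deriv s hs.1).rpow_const (Or.inl (ne_of_gt (hVpos s hs)))).add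
        ((hasDerivAt_id s).div_const Tc)
    have hanti : AntitoneOn g (Set.Icc 0 t) := by
      apply antitoneOn_of_deriv_nonpos (convex_Icc 0 t)
      · exact ContinuousOn.congr (fun s hs => ((hgderiv s hs).continuousAt).continuousWithinAt)
          (fun s hs => rfl)
      · intro s hs
        rw [interior_Icc] at hs
        have hs' : s ∈ Set.Icc (0:ℝ) t := ⟨le_of_lt hs.1, le_of_lt hs.2⟩
        exact ((hgderiv s hs').differentiableAt).differentiableWithinAt
      · intro s hs
        rw [interior_Icc] at hs
        have hs' : s ∈ Set.Icc (0:ℝ) t := ⟨le_of_lt hs.1, le_of_lt hs.2⟩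
        rw [(hgderiv s hs').deriv]
        have hV := hVpos s hs'
        have hIneq := hw_ineq s hs'.1 (hne s hs')
        have hpow : W (x s) ^ p * W (x s) ^ (1 - p - 1) = 1 := by
          rw [← Real.rpow_add hV, show p + (1 - p - 1) = 0 by ring, Real.rpow_zero]
        -- multiply inequality by (1-p) * V^(1-p-1) ≥ 0
        have hfac : (0:ℝ) < (1 - p) * W (x s) ^ (1 - p - 1) :=
          mul_pos h1p (Real.rpow_pos_of_pos hV _)
        have h2 : w' s * ((1 - p) * W (x s) ^ (1 - p - 1)) ≤
            (-(1 / ((1 - p) * Tc)) * W (x s) ^ p) * ((1 - p) * W (x s) ^ (1 - p - 1)) :=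
          mul_le_mul_of_nonneg_right hIneq (le_of_lt hfac)
        have h3 : (-(1 / ((1 - p) * Tc)) * W (x s) ^ p) * ((1 - p) * W (x s) ^ (1 - p - 1))
            = -(1 / Tc) := by
          calc (-(1 / ((1 - p) * Tc)) * W (x s) ^ p) * ((1 - p) * W (x s) ^ (1 - p - 1))
              = -(1 / ((1 - p) * Tc)) * (1 - p) * (W (x s) ^ p * W (x s) ^ (1 - p - 1)) := by
                ring
            _ = -(1 / ((1 - p) * Tc)) * (1 - p) * 1 := by rw [hpow]
            _ = -(1 / Tc) := by
                field_simp
        nlinarith [h2, h3]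
    have hle : g t ≤ g 0 := hanti (Set.left_mem_Icc.2 ht0) (Set.right_mem_Icc.2 ht0) ht0
    have hgt : W (x t) ^ (1 - p) + t / Tc ≤ W (x 0) ^ (1 - p) := by
      simpa [hg] using hle
    have hpos : 0 < W (x t) ^ (1 - p) :=
      Real.rpow_pos_of_pos (hVpos t (Set.right_mem_Icc.2 ht0)) _
    have : Tc * W (x 0) ^ (1 - p) ≤ t := ht
    have hdiv : W (x 0) ^ (1 - p) ≤ t / Tc := (le_div_iff₀ hTc).2 (by linarith [mul_comm Tc (W (x 0) ^ (1 - p))])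
    linarith
  refine ⟨main, fun t ht => main t ?_⟩
  have h1 : W (x 0) ^ (1 - p) ≤ 1 :=
    Real.rpow_le_one hW0 (le_of_lt (hW_mem (x 0)).2) (le_of_lt h1p)
  nlinarith
end

section
/- Let κ be a class K¹ function differentiable on (0,∞) with κ' > 0, 0 ≤ p < 1, Tc > 0, μ > 0, and let V : ℝⁿ → [0,∞) satisfy α₁(‖x‖) ≤ V(x) ≤ α₂(‖x‖) for class K∞ functions α₁, α₂. If along every solution x(t) of ẋ = f(x) the map t ↦ V(x(t)) is differentiable and d/dt V(x(t)) ≤ -(1/((1-p)Tc)) · κ(V(x(t)))^p / κ'(V(x(t))) whenever ‖x(t)‖ ≥ μ, then every solution satisfies ‖x(t)‖ ≤ α₁⁻¹(α₂(μ)) for all t ≥ Tc. -/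
def IsClassKInf (alpha : ℝ → ℝ) : Prop :=
  ContinuousOn alpha (Set.Ici 0) ∧ StrictMonoOn alpha (Set.Ici 0) ∧ alpha 0 = 0 ∧
    Filter.Tendsto alpha Filter.atTop Filter.atTop ∧
    ∀ r ∈ Set.Ici (0 : ℝ), alpha r ∈ Set.Ici (0 : ℝ)

/- Predefined-time ultimate boundedness: if α₁(‖x‖) ≤ V(x) ≤ α₂(‖x‖) with α₁, α₂
class K∞ and d/dt V(x(t)) ≤ -(1/((1-p)Tc)) κ(V(x(t)))^p / κ'(V(x(t))) whenever
‖x(t)‖ ≥ μ, then ‖x(t)‖ ≤ α₁⁻¹(α₂(μ)) for all t ≥ Tc. -/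
theorem predefined_time_ultimate_boundedness {n : ℕ}
    (f : EuclideanSpace ℝ (Fin n) → EuclideanSpace ℝ (Fin n))
    (V : EuclideanSpace ℝ (Fin n) → ℝ)
    (α₁ α₂ ι₁ : ℝ → ℝ) (hα₁ : IsClassKInf α₁) (hα₂ : IsClassKInf α₂)
    (hι₁ : Set.InvOn ι₁ α₁ (Set.Ici 0) (Set.Ici 0))
    (hV_bounds : ∀ z, α₁ ‖z‖ ≤ V z ∧ V z ≤ α₂ ‖z‖)
    (κ κ' : ℝ → ℝ) (hκ : IsClassK1 κ)
    (hκ' : ∀ r > (0:ℝ), HasDerivAt κ (κ' r) r ∧ 0 < κ' r)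
    (p Tc μ : ℝ) (hp : 0 ≤ p) (hp1 : p < 1) (hTc : 0 < Tc) (hμ : 0 < μ)
    (x : ℝ → EuclideanSpace ℝ (Fin n)) (w' : ℝ → ℝ)
    (hx_sol : ∀ t ≥ (0:ℝ), HasDerivAt x (f (x t)) t)
    (hw_deriv : ∀ t ≥ (0:ℝ), HasDerivAt (fun τ => V (x τ)) (w' t) t)
    (hw_ineq : ∀ t ≥ (0:ℝ), μ ≤ ‖x t‖ →
      w' t ≤ -(1 / ((1 - p) * Tc)) * (κ (V (x t)) ^ p / κ' (V (x t)))) :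
    ∀ t ≥ Tc, ‖x t‖ ≤ ι₁ (α₂ μ) := by
  obtain ⟨hα₁c, hα₁m, hα₁0, hα₁top, hα₁pos⟩ := hα₁
  obtain ⟨hα₂c, hα₂m, hα₂0, hα₂top, hα₂pos⟩ := hα₂
  obtain ⟨hκc, hκm, hκ0, hκtop, hκico⟩ := hκ
  set w : ℝ → ℝ := fun t => V (x t) with hwdef
  have h1p : (0:ℝ) < 1 - p := by linarith
  have hα₂μ0 : 0 < α₂ μ := by
    rw [← hα₂0]
    exact hα₂m (Set.mem_Ici.mpr le_rfl) (Set.mem_Ici.mpr hμ.le) hμ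
  -- basic facts about w
  have hwlb : ∀ t, α₁ ‖x t‖ ≤ w t := fun t => (hV_bounds (x t)).1
  have hwub : ∀ t, w t ≤ α₂ ‖x t‖ := fun t => (hV_bounds (x t)).2
  have hwnn : ∀ t, 0 ≤ w t := fun t =>
    le_trans (hα₁pos _ (Set.mem_Ici.mpr (norm_nonneg _))) (hwlb t)
  -- if w t > α₂ μ (and t ≥ 0) then w' t ≤ 0
  have hderiv_nonpos : ∀ t, 0 ≤ t → α₂ μ < w t → w' t ≤ 0 := by
    intro t ht hwt
    have hwt0 : 0 < w t := lt_trans hα₂μ0 hwt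
    have hxt : μ ≤ ‖x t‖ := by
      by_contra hc
      push_neg at hc
      have : α₂ ‖x t‖ ≤ α₂ μ :=
        (hα₂m.monotoneOn (Set.mem_Ici.mpr (norm_nonneg _)) (Set.mem_Ici.mpr hμ.le)) hc.le
      exact absurd (le_trans (hwub t) this) (not_le.mpr hwt)
    have h := hw_ineq t ht hxt
    have hκ'pos : 0 < κ' (w t) := (hκ' (w t) hwt0).2
    have hκnn : 0 ≤ κ (w t) := (hκico _ (Set.mem_Ici.mpr hwt0.le)).1
    have hnum : 0 ≤ κ (w t) ^ p / κ' (w t) :=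
      div_nonneg (Real.rpow_nonneg hκnn p) hκ'pos.le
    have hcoef : 0 < 1 / ((1 - p) * Tc) := by positivity
    nlinarith
  -- barrier lemma: once w ≤ α₂ μ, it stays below
  have hbar : ∀ t₀, 0 ≤ t₀ → w t₀ ≤ α₂ μ → ∀ t ≥ t₀, w t ≤ α₂ μ := by
    intro t₀ ht₀ hwt₀ t ht
    by_contra hcon
    push_neg at hcon
    have hcont : ContinuousOn w (Set.Icc t₀ t) := by
      intro τ hτ
      exact ((hw_deriv τ (le_trans ht₀ hτ.1)).continuousAt).continuousWithinAt
    set S : Set ℝ := {τ | τ ∈ Set.Icc t₀ t ∧ w τ ≤ α₂ μ} with hSdef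
    have hSsub : S ⊆ Set.Icc t₀ t := fun τ hτ => hτ.1
    have hSclosed : IsClosed S := by
      have : S = Set.Icc t₀ t ∩ w ⁻¹' Set.Iic (α₂ μ) := by
        ext τ; simp [hSdef, Set.mem_Icc, and_assoc]
      rw [this]
      exact ContinuousOn.preimage_isClosed_of_isClosed hcont isClosed_Icc isClosed_Iic
    have hScomp : IsCompact S := (isCompact_Icc).of_isClosed_subset hSclosed hSsub
    have hSne : S.Nonempty := ⟨t₀, ⟨⟨le_rfl, le_trans (le_refl t₀) ht⟩, hwt₀⟩⟩
    set s := sSup S with hsdef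
    have hsS : s ∈ S := hScomp.sSup_mem hSne
    have hst : s < t := lt_of_le_of_ne hsS.1.2 (by
      intro h; rw [h] at hsS; exact absurd hsS.2 (not_le.mpr hcon))
    have hgt : ∀ τ, s < τ → τ ≤ t → α₂ μ < w τ := by
      intro τ hsτ hτt
      by_contra hc
      push_neg at hc
      have hτS : τ ∈ S := ⟨⟨le_trans hsS.1.1 hsτ.le, hτt⟩, hc⟩
      exact absurd (le_csSup hScomp.bddAbove hτS) (not_le.mpr hsτ)
    have hanti : AntitoneOn w (Set.Icc s t) := by
      apply antitoneOn_of_deriv_nonpos (convex_Icc s t)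
      · exact hcont.mono (Set.Icc_subset_Icc hsS.1.1 le_rfl)
      · intro τ hτ
        rw [interior_Icc] at hτ
        exact ((hw_deriv τ (le_trans (le_trans ht₀ hsS.1.1) hτ.1.le)).differentiableAt).differentiableWithinAt
      · intro τ hτ
        rw [interior_Icc] at hτ
        have hτ0 : (0:ℝ) ≤ τ := le_trans (le_trans ht₀ hsS.1.1) hτ.1.le
        rw [(hw_deriv τ hτ0).deriv]
        exact hderiv_nonpos τ hτ0 (hgt τ hτ.1 hτ.2.le)
    have : w t ≤ w s :=
      hanti (Set.mem_Icc.mpr ⟨le_rfl, hst.le⟩) (Set.mem_Icc.mpr ⟨hst.le, le_rfl⟩) hst.le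
    exact absurd (le_trans this hsS.2) (not_le.mpr hcon)
  -- existence of a time t₀ ∈ [0, Tc] where ‖x t₀‖ ≤ μ
  have hexists : ∃ t₀ ∈ Set.Icc (0:ℝ) Tc, ‖x t₀‖ ≤ μ := by
    by_contra hcon
    push_neg at hcon
    -- on [0, Tc] we have μ < ‖x τ‖, hence w τ ≥ α₁ μ > 0
    have hwpos : ∀ τ ∈ Set.Icc (0:ℝ) Tc, 0 < w τ := by
      intro τ hτ
      have h1 : α₁ μ ≤ α₁ ‖x τ‖ :=
        (hα₁m.monotoneOn (Set.mem_Ici.mpr hμ.le) (Set.mem_Ici.mpr (norm_nonneg _)))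
          (hcon τ hτ).le
      have h2 : 0 < α₁ μ := by
        rw [← hα₁0]
        exact hα₁m (Set.mem_Ici.mpr le_rfl) (Set.mem_Ici.mpr hμ.le) hμ
      linarith [hwlb τ]
    have hκpos : ∀ τ ∈ Set.Icc (0:ℝ) Tc, 0 < κ (w τ) := by
      intro τ hτ
      rw [← hκ0]
      exact hκm (Set.mem_Ici.mpr le_rfl) (Set.mem_Ici.mpr (hwpos τ hτ).le) (hwpos τ hτ)
    set u : ℝ → ℝ := fun τ => κ (w τ) ^ (1 - p) with hudef
    have hu_deriv : ∀ τ ∈ Set.Icc (0:ℝ) Tc,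
        HasDerivAt u ((1 - p) * κ (w τ) ^ (1 - p - 1) * (κ' (w τ) * w' τ)) τ := by
      intro τ hτ
      have h1 : HasDerivAt κ (κ' (w τ)) (w τ) := (hκ' (w τ) (hwpos τ hτ)).1
      have h2 : HasDerivAt w (w' τ) τ := hw_deriv τ hτ.1
      have h3 : HasDerivAt (fun y : ℝ => y ^ (1 - p))
          ((1 - p) * κ (w τ) ^ (1 - p - 1)) (κ (w τ)) :=
        Real.hasDerivAt_rpow_const (Or.inl (hκpos τ hτ).ne')
      have h12 : HasDerivAt (fun τ => κ (w τ)) (κ' (w τ) * w' τ) τ := h1.comp τ h2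
      exact h3.comp τ h12
    have hu_deriv_bound : ∀ τ ∈ Set.Icc (0:ℝ) Tc,
        (1 - p) * κ (w τ) ^ (1 - p - 1) * (κ' (w τ) * w' τ) ≤ -(1 / Tc) := by
      intro τ hτ
      have hκ'pos : 0 < κ' (w τ) := (hκ' (w τ) (hwpos τ hτ)).2
      have hc := hκpos τ hτ
      have hw' := hw_ineq τ hτ.1 (hcon τ hτ).le
      have hb1 : κ' (w τ) * w' τ ≤ -(1 / ((1 - p) * Tc)) * κ (w τ) ^ p := by
        have := mul_le_mul_of_nonneg_left hw' hκ'pos.le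
        calc κ' (w τ) * w' τ ≤ κ' (w τ) * (-(1 / ((1 - p) * Tc)) * (κ (w τ) ^ p / κ' (w τ))) := this
          _ = -(1 / ((1 - p) * Tc)) * κ (w τ) ^ p := by
              field_simp
      have hpow_pos : 0 < κ (w τ) ^ (1 - p - 1) := Real.rpow_pos_of_pos hc _
      have hb2 : (1 - p) * κ (w τ) ^ (1 - p - 1) * (κ' (w τ) * w' τ)
          ≤ (1 - p) * κ (w τ) ^ (1 - p - 1) * (-(1 / ((1 - p) * Tc)) * κ (w τ) ^ p) := by
        apply mul_le_mul_of_nonneg_left hb1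
        positivity
      have hkey : κ (w τ) ^ (1 - p - 1) * κ (w τ) ^ p = 1 := by
        rw [← Real.rpow_add hc]
        norm_num
      calc (1 - p) * κ (w τ) ^ (1 - p - 1) * (κ' (w τ) * w' τ)
          ≤ (1 - p) * κ (w τ) ^ (1 - p - 1) * (-(1 / ((1 - p) * Tc)) * κ (w τ) ^ p) := hb2
        _ = -((1 - p) * (1 / ((1 - p) * Tc))) * (κ (w τ) ^ (1 - p - 1) * κ (w τ) ^ p) := by
              ring
        _ = -((1 - p) * (1 / ((1 - p) * Tc))) * 1 := by rw [hkey]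
        _ = -(1 / Tc) := by
              field_simp
    -- g τ = u τ + τ / Tc is antitone on [0, Tc]
    set g : ℝ → ℝ := fun τ => u τ + τ / Tc with hgdef
    have hid : ∀ τ : ℝ, HasDerivAt (fun τ : ℝ => τ / Tc) (1 / Tc) τ := by
      intro τ
      simpa using (hasDerivAt_id τ).div_const Tc
    have hg_deriv : ∀ τ ∈ Set.Icc (0:ℝ) Tc,
        HasDerivAt g ((1 - p) * κ (w τ) ^ (1 - p - 1) * (κ' (w τ) * w' τ) + 1 / Tc) τ :=
      fun τ hτ => (hu_deriv τ hτ).add (hid τ)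
    have hganti : AntitoneOn g (Set.Icc (0:ℝ) Tc) := by
      apply antitoneOn_of_deriv_nonpos (convex_Icc 0 Tc)
      · intro τ hτ
        exact ((hg_deriv τ hτ).continuousAt).continuousWithinAt
      · intro τ hτ
        rw [interior_Icc] at hτ
        have hτ' : τ ∈ Set.Icc (0:ℝ) Tc := ⟨hτ.1.le, hτ.2.le⟩
        exact ((hg_deriv τ hτ').differentiableAt).differentiableWithinAt
      · intro τ hτ
        rw [interior_Icc] at hτ
        have hτ' : τ ∈ Set.Icc (0:ℝ) Tc := ⟨hτ.1.le, hτ.2.le⟩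
        rw [(hg_deriv τ hτ').deriv]
        have := hu_deriv_bound τ hτ'
        linarith
    have hg : g Tc ≤ g 0 :=
      hganti (Set.mem_Icc.mpr ⟨le_rfl, hTc.le⟩) (Set.mem_Icc.mpr ⟨hTc.le, le_rfl⟩) hTc.le
    have hu0lt : u 0 < 1 := by
      have h0 : (0:ℝ) ∈ Set.Icc (0:ℝ) Tc := Set.mem_Icc.mpr ⟨le_rfl, hTc.le⟩
      have := hκico (w 0) (Set.mem_Ici.mpr (hwnn 0))
      exact Real.rpow_lt_one this.1 this.2 h1p
    have huTc : 0 ≤ u Tc := Real.rpow_nonneg (hκico (w Tc) (Set.mem_Ici.mpr (hwnn Tc))).1 _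
    have : u Tc + Tc / Tc ≤ u 0 + 0 / Tc := hg
    rw [div_self hTc.ne'] at this
    simp at this
    linarith
  -- conclude
  obtain ⟨t₀, ht₀mem, ht₀⟩ := hexists
  have hwt₀ : w t₀ ≤ α₂ μ :=
    le_trans (hwub t₀)
      ((hα₂m.monotoneOn (Set.mem_Ici.mpr (norm_nonneg _)) (Set.mem_Ici.mpr hμ.le)) ht₀)
  -- find r ≥ 0 with α₁ r = α₂ μ
  obtain ⟨M, hM⟩ := (hα₁top.eventually_ge_atTop (α₂ μ)).exists_forall_of_atTop
  set M' := max M 0 with hM'def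
  have hM'0 : (0:ℝ) ≤ M' := le_max_right _ _
  have hMval : α₂ μ ≤ α₁ M' := hM M' (le_max_left _ _)
  have hIVT : Set.Icc (α₁ 0) (α₁ M') ⊆ α₁ '' Set.Icc 0 M' :=
    intermediate_value_Icc hM'0 (hα₁c.mono (fun y hy => Set.mem_Ici.mpr hy.1))
  have hmem : α₂ μ ∈ Set.Icc (α₁ 0) (α₁ M') := ⟨by rw [hα₁0]; exact hα₂μ0.le, hMval⟩
  obtain ⟨r, hr_mem, hr⟩ := hIVT hmem
  have hr0 : (0:ℝ) ≤ r := hr_mem.1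
  have hι : ι₁ (α₂ μ) = r := by
    rw [← hr]
    exact hι₁.1 (Set.mem_Ici.mpr hr0)
  intro t ht
  have hwt : w t ≤ α₂ μ := hbar t₀ ht₀mem.1 hwt₀ t (le_trans ht₀mem.2 ht)
  have : α₁ ‖x t‖ ≤ α₁ r := by rw [hr]; exact le_trans (hwlb t) hwt
  rw [hι]
  exact (hα₁m.le_iff_le (Set.mem_Ici.mpr (norm_nonneg _)) (Set.mem_Ici.mpr hr0)).mp this
end

section
/- With V(s) = ‖s‖ on ℝᵐ, the closed-loop system ṡ = u + Δ(x,t), where u = -(1/((1-ρ₂)ρ₁))·(κ(‖s‖)^{ρ₂}/κ'(‖s‖))·s/‖s‖ - ρ₃·s/(‖s‖ + ρ₄) and ‖Δ(x,t)‖ ≤ δ with ρ₃ > δ ≥ 0, ρ₄ ≥ 0, ρ₁ > 0, 0 ≤ ρ₂ < 1, and κ a class K¹ function differentiable on (0,∞), satisfies along its solutions d/dt V(s(t)) ≤ -(1/((1-ρ₂)ρ₁))·κ(V(s))^{ρ₂}/κ'(V(s)) whenever ‖s(t)‖ ≥ δρ₄/(ρ₃ - δ). -/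
open RealInnerProductSpace

theorem HasDerivAt.norm_of_ne_zero {F : Type*} [NormedAddCommGroup F] [InnerProductSpace ℝ F]
    {f : ℝ → F} {f' : F} {t : ℝ} (hf : HasDerivAt f f' t) (h0 : f t ≠ 0) :
    HasDerivAt (fun τ => ‖f τ‖) ⟪‖f t‖⁻¹ • f t, f'⟫ t := by
  have hpos : 0 < ‖f t‖ := norm_pos_iff.mpr h0
  have hsqrt := hf.norm_sq.sqrt (pow_ne_zero 2 hpos.ne')
  simp only [Real.sqrt_sq (norm_nonneg _)] at hsqrt
  convert hsqrt using 1
  rw [real_inner_smul_left]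
  field_simp

theorem le_mul_div_add_of_div_sub_le {δ ρ₃ ρ₄ n : ℝ} (hρ₃ : δ < ρ₃) (hρ₄ : 0 ≤ ρ₄) (hn : 0 < n)
    (h : δ * ρ₄ / (ρ₃ - δ) ≤ n) : δ ≤ ρ₃ * n / (n + ρ₄) := by
  rw [div_le_iff₀ (sub_pos.mpr hρ₃)] at h
  rw [le_div_iff₀ (by positivity)]
  linarith

theorem inner_unit_closed_loop_le {F : Type*} [NormedAddCommGroup F] [InnerProductSpace ℝ F]
    {s Δ : F} {c ρ₃ ρ₄ δ : ℝ} (hs : s ≠ 0) (hΔ : ‖Δ‖ ≤ δ) (hρ₃ : δ < ρ₃) (hρ₄ : 0 ≤ ρ₄)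
    (hthr : δ * ρ₄ / (ρ₃ - δ) ≤ ‖s‖) :
    ⟪‖s‖⁻¹ • s, (-c • (‖s‖⁻¹ • s) - ρ₃ • ((‖s‖ + ρ₄)⁻¹ • s)) + Δ⟫ ≤ -c := by
  have hpos : 0 < ‖s‖ := norm_pos_iff.mpr hs
  have hunit : ‖‖s‖⁻¹ • s‖ = 1 := norm_smul_inv_norm hs
  have hself : ⟪‖s‖⁻¹ • s, s⟫ = ‖s‖ := by
    rw [real_inner_smul_left, real_inner_self_eq_norm_sq]
    field_simp
  have hdist : ⟪‖s‖⁻¹ • s, Δ⟫ ≤ δ :=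
    (real_inner_le_norm _ _).trans (by rw [hunit, one_mul]; exact hΔ)
  have hgain := le_mul_div_add_of_div_sub_le hρ₃ hρ₄ hpos hthr
  rw [inner_add_right, inner_sub_right, real_inner_smul_right, real_inner_self_eq_norm_sq, hunit,
    real_inner_smul_right, real_inner_smul_right, hself]
  rw [mul_div_assoc, div_eq_inv_mul] at hgain
  linarith

theorem closed_loop_lyapunov_decrease_general {m : ℕ}
    (κ κ' : ℝ → ℝ)
    (ρ₁ ρ₂ ρ₃ ρ₄ δ : ℝ)
    (hρ₃ : δ < ρ₃) (hρ₄ : 0 ≤ ρ₄)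
    (s Δ : ℝ → EuclideanSpace ℝ (Fin m))
    (hΔ : ∀ t, ‖Δ t‖ ≤ δ)
    (hs_sol : ∀ t, s t ≠ 0 → HasDerivAt s
      ((-((1 / ((1 - ρ₂) * ρ₁)) * (κ ‖s t‖ ^ ρ₂ / κ' ‖s t‖)) • (‖s t‖⁻¹ • s t)
        - ρ₃ • ((‖s t‖ + ρ₄)⁻¹ • s t)) + Δ t) t) :
    ∀ t, s t ≠ 0 → δ * ρ₄ / (ρ₃ - δ) ≤ ‖s t‖ →
      ∃ w' : ℝ, HasDerivAt (fun τ => ‖s τ‖) w' t ∧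
        w' ≤ -(1 / ((1 - ρ₂) * ρ₁)) * (κ ‖s t‖ ^ ρ₂ / κ' ‖s t‖) := by
  intro t hst hthr
  refine ⟨_, (hs_sol t hst).norm_of_ne_zero hst, ?_⟩
  rw [neg_mul]
  exact inner_unit_closed_loop_le hst (hΔ t) hρ₃ hρ₄ hthr

theorem closed_loop_lyapunov_decrease {m : ℕ}
    (κ κ' : ℝ → ℝ) (hκ : IsClassK1 κ)
    (hκ' : ∀ r > (0:ℝ), HasDerivAt κ (κ' r) r ∧ 0 < κ' r)
    (ρ₁ ρ₂ ρ₃ ρ₄ δ : ℝ)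
    (hρ₁ : 0 < ρ₁) (hρ₂ : 0 ≤ ρ₂) (hρ₂' : ρ₂ < 1)
    (hδ : 0 ≤ δ) (hρ₃ : δ < ρ₃) (hρ₄ : 0 ≤ ρ₄)
    (s Δ : ℝ → EuclideanSpace ℝ (Fin m))
    (hΔ : ∀ t, ‖Δ t‖ ≤ δ)
    (hs_sol : ∀ t, s t ≠ 0 → HasDerivAt s
      ((-((1 / ((1 - ρ₂) * ρ₁)) * (κ ‖s t‖ ^ ρ₂ / κ' ‖s t‖)) • (‖s t‖⁻¹ • s t)
        - ρ₃ • ((‖s t‖ + ρ₄)⁻¹ • s t)) + Δ t) t) :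
    ∀ t, s t ≠ 0 → δ * ρ₄ / (ρ₃ - δ) ≤ ‖s t‖ →
      ∃ w' : ℝ, HasDerivAt (fun τ => ‖s τ‖) w' t ∧
        w' ≤ -(1 / ((1 - ρ₂) * ρ₁)) * (κ ‖s t‖ ^ ρ₂ / κ' ‖s t‖) :=
  closed_loop_lyapunov_decrease_general κ κ' ρ₁ ρ₂ ρ₃ ρ₄ δ hρ₃ hρ₄ s Δ hΔ hs_sol
end
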